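/- arXiv:1709.06542 — 6 statements merged into one kernel-verified Lean document; each statement's English description precedes it below -/
import Mathlib

section
/- There exist a finitely generated free group F, a finitely generated subgroup H of F, and a subset S of F that is closed in the profinite topology of F, such that the product set SH = {sh : s ∈ S, h ∈ H} is not closed in the profinite topology of F. -/
open scoped Pointwise

/-- A subset `C` of a group is closed in the profinite topology iff every point
outside `C` is separated from `C` by a coset of a finite-index normal subgroup. -/
def IsPTClosed {G : Type*} [Group G] (C : Set G) : Prop :=
  ∀ x : G, x ∉ C → ∃ N : Subgroup G, N.Normal ∧ N.FiniteIndex ∧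
    (x • (N : Set G)) ∩ C = ∅

/-!
Let `σ : F(a, b) → ℤ²` record exponent sums, `H = ⟨a⟩` and `S = σ⁻¹ T` with
`T = {(p, n) | n ≥ 1, 2 ^ n ∣ p, 3 ∤ p}`. Then `S H` is the set of words with positive
`b`-exponent sum: it contains every `b ^ n` with `n ≥ 1` but not `1`, whereas every finite-index
normal subgroup contains some `b ^ n`, so `S H` is not closed.

The set `S` is closed because every `(p, q) ∉ T` is separated from `T` modulo a single integer:
modulo `3` if `3 ∣ p`; otherwise `p ≠ 0`, so `2 ^ K ∤ p` for some `K` (with `K = q` if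
`q ≥ 1`), and modulo `2 ^ K * (K + |q|)` every point of `T` has second coordinate at least `K`,
hence first coordinate divisible by `2 ^ K`.
-/

section ProfiniteTopology

variable {G : Type*} [Group G] {C : Set G}

theorem IsPTClosed.of_forall_exists_hom_finite
    (h : ∀ x ∉ C, ∃ (Q : Type) (_ : Group Q) (_ : Finite Q) (f : G →* Q),
      ∀ y ∈ C, f y ≠ f x) :
    IsPTClosed C := by
  intro x hx
  obtain ⟨Q, _, _, f, hf⟩ := h x hx
  refine ⟨f.ker, inferInstance, inferInstance, Set.eq_empty_of_forall_notMem ?_⟩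
  rintro _ ⟨⟨k, hk, rfl⟩, hy⟩
  exact hf _ hy (by simp [MonoidHom.mem_ker.1 hk])

theorem IsPTClosed.one_mem_of_pow_mem (hC : IsPTClosed C) {g : G}
    (hg : ∀ n : ℕ, 0 < n → g ^ n ∈ C) : 1 ∈ C := by
  by_contra h1
  obtain ⟨N, _, hN, hdisj⟩ := hC 1 h1
  have : g ^ N.index ∈ (1 : G) • (N : Set G) ∩ C :=
    ⟨by simpa using N.pow_index_mem g, hg _ (Nat.pos_of_ne_zero hN.index_ne_zero)⟩
  exact Set.eq_empty_iff_forall_notMem.1 hdisj _ this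

end ProfiniteTopology

theorem Int.not_two_pow_natAbs_dvd {p : ℤ} (hp : p ≠ 0) : ¬ 2 ^ p.natAbs ∣ p := by
  intro h
  have := Nat.le_of_dvd (Int.natAbs_pos.2 hp) (by simpa using Int.natAbs_dvd_natAbs.2 h)
  exact this.not_gt Nat.lt_two_pow_self

theorem Int.le_of_modEq_add_abs {K n : ℕ} {q : ℤ} (hKq : 0 < q → (K : ℤ) ≤ q) (hn : 0 < n)
    (h : n ≡ q [ZMOD K + |q|]) : K ≤ n := by
  by_contra! hnK
  have := Int.eq_zero_of_abs_lt_dvd h.dvd (abs_lt.2 ⟨by grind, by grind⟩)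
  omega

def powTwoDvdSet : Set (ℤ × ℤ) :=
  {v | ∃ n : ℕ, 0 < n ∧ v.2 = n ∧ 2 ^ n ∣ v.1 ∧ ¬ 3 ∣ v.1}

theorem exists_modEq_separating_of_notMem_powTwoDvdSet {v : ℤ × ℤ} (hv : v ∉ powTwoDvdSet) :
    ∃ m : ℕ, 0 < m ∧
      ∀ w ∈ powTwoDvdSet, ¬ (w.1 ≡ v.1 [ZMOD m] ∧ w.2 ≡ v.2 [ZMOD m]) := by
  obtain ⟨p, q⟩ := v
  by_cases h3 : (3 : ℤ) ∣ p
  · refine ⟨3, by norm_num, ?_⟩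
    rintro w ⟨n, -, -, -, hw⟩ ⟨hp, -⟩
    exact hw (hp.dvd_iff.2 h3)
  set K := if 0 < q then q.toNat else p.natAbs
  have hKq : 0 < q → (K : ℤ) ≤ q := fun hq => by simp [K, hq]; omega
  have hK : ¬ 2 ^ K ∣ p := by
    by_cases hq : 0 < q
    · simp only [K, hq, if_true]
      exact fun h => hv ⟨q.toNat, by omega, by simp; omega, h, h3⟩
    · simp only [K, hq, if_false]
      exact Int.not_two_pow_natAbs_dvd (by rintro rfl; simp at h3)
  have hK0 : 0 < K := Nat.pos_of_ne_zero fun h => by simp [h] at hK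
  refine ⟨2 ^ K * (K + q.natAbs), by positivity, ?_⟩
  rintro ⟨p', _⟩ ⟨n, hn, rfl, hdvd, -⟩ ⟨hp, hq⟩
  push_cast at hp hq
  have hKn : K ≤ n := Int.le_of_modEq_add_abs hKq hn (hq.of_mul_left _)
  exact hK ((hp.of_mul_right _).dvd_iff.1 ((pow_dvd_pow 2 hKn).trans hdvd))

noncomputable def exponentSums : FreeGroup (Fin 2) →* Multiplicative (ℤ × ℤ) :=
  FreeGroup.lift ![Multiplicative.ofAdd (1, 0), Multiplicative.ofAdd (0, 1)]

theorem exponentSums_of_zero_zpow (k : ℤ) :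
    (exponentSums (FreeGroup.of 0 ^ k)).toAdd = (k, 0) := by
  simp [exponentSums]

theorem exponentSums_of_one_pow (n : ℕ) :
    (exponentSums (FreeGroup.of 1 ^ n)).toAdd = (0, (n : ℤ)) := by
  simp [exponentSums]

def powTwoDvdPreimage : Set (FreeGroup (Fin 2)) :=
  {x | (exponentSums x).toAdd ∈ powTwoDvdSet}

theorem isPTClosed_powTwoDvdPreimage : IsPTClosed powTwoDvdPreimage := by
  refine IsPTClosed.of_forall_exists_hom_finite fun x hx => ?_
  obtain ⟨m, hm, hsep⟩ := exists_modEq_separating_of_notMem_powTwoDvdSet hx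
  have : NeZero m := ⟨hm.ne'⟩
  refine ⟨_, inferInstance, inferInstance,
    (((Int.castAddHom (ZMod m)).prodMap (Int.castAddHom (ZMod m))).toMultiplicative).comp
      exponentSums, fun y hy hxy => hsep _ hy ?_⟩
  have := congrArg Multiplicative.toAdd hxy
  simp only [MonoidHom.comp_apply, AddMonoidHom.toMultiplicative_apply_apply] at this
  simpa [Prod.ext_iff, ZMod.intCast_eq_intCast_iff] using this

theorem mem_powTwoDvdPreimage_mul_zpowers_iff (x : FreeGroup (Fin 2)) :
    x ∈ powTwoDvdPreimage *
        (Subgroup.zpowers (FreeGroup.of (0 : Fin 2)) : Set (FreeGroup (Fin 2))) ↔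
      0 < (exponentSums x).toAdd.2 := by
  constructor
  · rintro ⟨s, ⟨n, hn, hs, -⟩, _, ⟨k, rfl⟩, rfl⟩
    dsimp only
    rw [map_mul, toAdd_mul, Prod.snd_add, hs, exponentSums_of_zero_zpow, add_zero]
    exact_mod_cast hn
  · intro hx
    obtain ⟨n, hn⟩ : ∃ n : ℕ, (exponentSums x).toAdd.2 = n :=
      ⟨_, (Int.toNat_of_nonneg hx.le).symm⟩
    set p := (exponentSums x).toAdd.1
    have hs : (exponentSums (x * FreeGroup.of 0 ^ (2 ^ n - p))).toAdd = (2 ^ n, (n : ℤ)) := by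
      rw [map_mul, toAdd_mul, exponentSums_of_zero_zpow]
      ext <;> simp [p, hn]
    refine ⟨_, ⟨n, by omega, by rw [hs], by rw [hs], ?_⟩,
      FreeGroup.of 0 ^ (p - 2 ^ n), ⟨_, rfl⟩, ?_⟩
    · rw [hs]
      exact fun h => by simpa using Int.prime_three.dvd_of_dvd_pow h
    · simp [mul_assoc, ← zpow_add]

/-- There exist a finitely generated free group `F`, a finitely generated subgroup
`H` of `F`, and a subset `S` of `F` closed in the profinite topology of `F`, such
that the product set `S * H` is not closed in the profinite topology of `F`. -/
theorem exists_fg_subgroup_and_closed_set_with_product_not_closed :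
    ∃ (n : ℕ) (H : Subgroup (FreeGroup (Fin n))) (S : Set (FreeGroup (Fin n))),
      H.FG ∧ IsPTClosed S ∧
      ¬ IsPTClosed (S * (H : Set (FreeGroup (Fin n)))) := by
  refine ⟨2, Subgroup.zpowers (FreeGroup.of 0), powTwoDvdPreimage,
    ⟨{FreeGroup.of 0}, by simp [Subgroup.zpowers_eq_closure]⟩, isPTClosed_powTwoDvdPreimage,
    fun hclosed => ?_⟩
  have hpow (n : ℕ) (hn : 0 < n) : FreeGroup.of 1 ^ n ∈ powTwoDvdPreimage *
      (Subgroup.zpowers (FreeGroup.of (0 : Fin 2)) : Set (FreeGroup (Fin 2))) := by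
    rw [mem_powTwoDvdPreimage_mul_zpowers_iff, exponentSums_of_one_pow]
    exact Int.natCast_pos.2 hn
  simpa [mem_powTwoDvdPreimage_mul_zpowers_iff] using hclosed.one_mem_of_pow_mem hpow
end

section
/- Let F = ⟨a,b⟩ be the free group of rank 2 and let (m_k)_{k≥1} be a sequence of integers such that: (i) for every integer n ≥ 1 the sequence of residues (m_k mod n) is eventually constant; and (ii) for every integer m there exists n ≥ 1 with m_k ≢ m (mod n) for all sufficiently large k. Then the set S = {a^{k!} b^{m_k} : k ≥ 1} is closed in the profinite topology of F. -/
open scoped Pointwise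

/-!
Free groups are residually finite: a reduced word of length `L` is realised by permutations of
`{0, …, L}` that walk along the path `L → L - 1 → ⋯ → 0`, so the word moves `L` to `0`.

Given `x ∉ S`, let `c` be the exponent sum of `b` in `x`, and choose `n`, `K` with
`m k ≢ c (mod n)` for `k ≥ K`. The kernel of "exponent sum of `b` mod `n`" separates `x` from all
`a^{k!} b^{m k}` with `k ≥ K`; the finitely many remaining elements are separated from `x` by
residual finiteness, and intersecting these finitely many subgroups separates `x` from `S`.
-/

theorem Equiv.Perm.exists_forall_apply_eq_of_rel {X : Type*} [Finite X] (r : X → X → Prop)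
    (hfun : ∀ x y y', r x y → r x y' → y = y') (hinj : ∀ x x' y, r x y → r x' y → x = x') :
    ∃ σ : Equiv.Perm X, ∀ x y, r x y → σ x = y := by
  classical
  have := Fintype.ofFinite X
  let f : X → X := fun x => if h : ∃ y, r x y then h.choose else x
  have hf : ∀ x y, r x y → r x (f x) := fun x y hxy => by
    simp only [f, dif_pos (⟨y, hxy⟩ : ∃ y, r x y)]
    exact Exists.choose_spec _
  obtain ⟨g, hg⟩ := Set.MapsTo.exists_equiv_extend_of_card_eq (s := {x | ∃ y, r x y})
    (t := Finset.univ) (f := f) (by simp) (fun _ _ => Finset.mem_coe.2 (Finset.mem_univ _))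
    (fun x ⟨y, hy⟩ x' ⟨y', hy'⟩ h => hinj x x' (f x) (hf x y hy) (h ▸ hf x' y' hy'))
  refine ⟨g.trans (Equiv.subtypeUnivEquiv Finset.mem_univ), fun x y hxy => ?_⟩
  exact (hg x ⟨y, hxy⟩).trans (hfun x _ _ (hf x y hxy) hxy)

namespace FreeGroup

variable {α : Type*}

theorem lift_mk_apply_of_forall_getElem {X : Type*} (ρ : α → Equiv.Perm X)
    (l : List (α × Bool)) (p : ℕ → X)
    (hp : ∀ i (h : i < l.length), cond l[i].2 (ρ l[i].1) (ρ l[i].1)⁻¹ (p (i + 1)) = p i) :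
    lift ρ (mk l) (p l.length) = p 0 := by
  induction l generalizing p with
  | nil => rfl
  | cons x l ih =>
    have htail := ih (fun i => p (i + 1)) fun i h => hp (i + 1) (by simpa using h)
    rw [lift_mk, List.map_cons, List.prod_cons, ← lift_mk, Equiv.Perm.mul_apply,
      List.length_cons, htail]
    exact hp 0 (by simp)

theorem IsReduced.eq_of_getElem_fst_eq {l : List (α × Bool)} (hl : IsReduced l) {i j : ℕ}
    (hi : i < l.length) (hj : j < l.length) (hfst : l[i].1 = l[j].1)
    (hij : i + l[i].2.toNat = j + l[j].2.toNat ∨ i + (!l[i].2).toNat = j + (!l[j].2).toNat) :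
    i = j := by
  wlog h : i < j generalizing i j
  · rcases Nat.lt_or_ge j i with h' | h'
    · exact (this hj hi hfst.symm (hij.imp Eq.symm Eq.symm) h').symm
    · omega
  have hsnd := List.isChain_iff_getElem.mp hl i (by omega)
  obtain rfl : j = i + 1 := by
    generalize l[i].2 = bi at hij
    generalize l[j].2 = bj at hij
    cases bi <;> cases bj <;> simp at hij <;> omega
  rw [hsnd hfst] at hij
  omega

theorem exists_perm_lift_ne_one [DecidableEq α] {w : FreeGroup α} (hw : w ≠ 1) :
    ∃ ρ : α → Equiv.Perm (Fin (w.toWord.length + 1)), lift ρ w ≠ 1 := by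
  set l := w.toWord
  set L := l.length
  have hred : IsReduced l := isReduced_toWord
  -- The `i`-th letter `a^{±1}` of `w` prescribes `σ a (i + 1) = i`, resp. `σ a i = i + 1`;
  -- reducedness makes these prescriptions a partial injection.
  let r : α → Fin (L + 1) → Fin (L + 1) → Prop := fun a x y => ∃ i, ∃ hi : i < L,
    l[i].1 = a ∧ x.val = i + l[i].2.toNat ∧ y.val = i + (!l[i].2).toNat
  have hσ := fun a => Equiv.Perm.exists_forall_apply_eq_of_rel (r a)
    (fun _ _ _ ⟨i, hi, hia, hx, hy⟩ ⟨j, hj, hja, hx', hy'⟩ => by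
      obtain rfl := hred.eq_of_getElem_fst_eq hi hj (hia.trans hja.symm) (.inl (by omega))
      exact Fin.ext (by omega))
    (fun _ _ _ ⟨i, hi, hia, hx, hy⟩ ⟨j, hj, hja, hx', hy'⟩ => by
      obtain rfl := hred.eq_of_getElem_fst_eq hi hj (hia.trans hja.symm) (.inr (by omega))
      exact Fin.ext (by omega))
  choose σ hσ using hσ
  let p : ℕ → Fin (L + 1) := Fin.ofNat (L + 1)
  have hp : ∀ n ≤ L, (p n).val = n := fun n hn => by simp [p]; omega
  have hpath := lift_mk_apply_of_forall_getElem σ l p fun i hi => by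
    have hstep := hσ _ (p (i + l[i].2.toNat)) (p (i + (!l[i].2).toNat))
      ⟨i, hi, rfl, hp _ (by cases l[i].2 <;> simp <;> omega),
        hp _ (by cases l[i].2 <;> simp <;> omega)⟩
    revert hstep
    cases l[i].2
    · intro h
      simp only [Bool.toNat_false, Bool.not_false, Bool.toNat_true, add_zero] at h
      simp [Equiv.symm_apply_eq, h]
    · simp
  rw [mk_toWord] at hpath
  refine ⟨σ, fun h => ?_⟩
  rw [h, Equiv.Perm.one_apply, Fin.ext_iff, hp L le_rfl, hp 0 (Nat.zero_le _)] at hpath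
  exact hw (toWord_eq_nil_iff.mp (List.length_eq_zero_iff.mp hpath))

instance : Group.ResiduallyFinite (FreeGroup α) := by
  classical
  refine Group.residuallyFinite_of_forall_exists_finite_monoidHom fun w hw => ?_
  obtain ⟨ρ, hρ⟩ := exists_perm_lift_ne_one hw
  exact ⟨_, _, inferInstance, lift ρ, hρ⟩

variable [DecidableEq α]

def exponentSum (a : α) : FreeGroup α →* Multiplicative ℤ :=
  lift (Pi.mulSingle a (Multiplicative.ofAdd 1))

@[simp]
theorem exponentSum_of_self (a : α) : exponentSum a (of a) = Multiplicative.ofAdd 1 := by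
  simp [exponentSum]

@[simp]
theorem exponentSum_of_of_ne {a b : α} (h : b ≠ a) : exponentSum a (of b) = 1 := by
  simp [exponentSum, h]

end FreeGroup

def IsPTSeparated {G : Type*} [Group G] (x : G) (C : Set G) : Prop :=
  ∃ N : Subgroup G, N.Normal ∧ N.FiniteIndex ∧ Disjoint (x • (N : Set G)) C

theorem isPTClosed_iff_forall_isPTSeparated {G : Type*} [Group G] {C : Set G} :
    IsPTClosed C ↔ ∀ x ∉ C, IsPTSeparated x C := by
  simp only [IsPTClosed, IsPTSeparated, Set.disjoint_iff_inter_eq_empty]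

namespace IsPTSeparated

variable {G : Type*} [Group G] {x : G} {C D : Set G}

theorem mono (h : IsPTSeparated x D) (hCD : C ⊆ D) : IsPTSeparated x C :=
  let ⟨N, hN, hNfin, hND⟩ := h
  ⟨N, hN, hNfin, hND.mono_right hCD⟩

theorem union (hC : IsPTSeparated x C) (hD : IsPTSeparated x D) : IsPTSeparated x (C ∪ D) :=
  let ⟨N, _, _, hNC⟩ := hC
  let ⟨M, _, _, hMD⟩ := hD
  ⟨N ⊓ M, inferInstance, inferInstance,
    Disjoint.union_right (hNC.mono_left (Set.smul_set_mono inf_le_left))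
      (hMD.mono_left (Set.smul_set_mono inf_le_right))⟩

theorem of_finite [Group.ResiduallyFinite G] (hC : C.Finite) (hx : x ∉ C) :
    IsPTSeparated x C := by
  induction C, hC using Set.Finite.induction_on with
  | empty => exact ⟨⊤, inferInstance, inferInstance, Set.disjoint_empty _⟩
  | @insert y C _ _ ih =>
    rw [Set.insert_eq]
    refine union ?_ (ih fun h => hx (Set.mem_insert_of_mem y h))
    obtain ⟨H, hH⟩ := Group.exists_finiteIndexNormalSubgroup_notMem (x⁻¹ * y)
      (fun h => hx (inv_mul_eq_one.mp h ▸ Set.mem_insert x C))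
    refine ⟨H, H.isNormal', inferInstance, ?_⟩
    rwa [Set.disjoint_singleton_right, mem_leftCoset_iff]

theorem of_map_ne {H : Type*} [Group H] [Finite H] (f : G →* H) (x : G) :
    IsPTSeparated x {y | f y ≠ f x} := by
  refine ⟨f.ker, f.normal_ker, Subgroup.finiteIndex_ker f, Set.disjoint_left.mpr fun y hy => ?_⟩
  rw [mem_leftCoset_iff, SetLike.mem_coe, MonoidHom.mem_ker, map_mul, map_inv,
    inv_mul_eq_one] at hy
  exact not_not.mpr hy.symm

end IsPTSeparated

open FreeGroup Nat in
theorem closed_of_factorial_powers_times_profinite_divergent_powers_general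
    (m : ℕ → ℤ)
    (hdiv : ∀ c : ℤ, ∃ n : ℤ, 1 ≤ n ∧ ∃ K : ℕ, ∀ k : ℕ, K ≤ k → 1 ≤ k →
      ¬ m k ≡ c [ZMOD n]) :
    IsPTClosed {x : FreeGroup (Fin 2) | ∃ k : ℕ, 1 ≤ k ∧
      x = (FreeGroup.of (0 : Fin 2)) ^ (Nat.factorial k) *
          (FreeGroup.of (1 : Fin 2)) ^ (m k)} := by
  refine isPTClosed_iff_forall_isPTSeparated.mpr fun x hx => ?_
  obtain ⟨n, hn, K, hK⟩ := hdiv (Multiplicative.toAdd (exponentSum 1 x))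
  lift n to ℕ using by omega
  have : NeZero n := ⟨by omega⟩
  let ψ := (Int.castAddHom (ZMod n)).toMultiplicative.comp (exponentSum (1 : Fin 2))
  have hsub : {x : FreeGroup (Fin 2) | ∃ k : ℕ, 1 ≤ k ∧ x = of 0 ^ k ! * of 1 ^ m k} ⊆
      (fun k => of 0 ^ k ! * of 1 ^ m k) '' Set.Ico 1 K ∪ {y | ψ y ≠ ψ x} := by
    rintro _ ⟨k, hk, rfl⟩
    rcases lt_or_ge k K with hkK | hKk
    · exact .inl ⟨k, ⟨hk, hkK⟩, rfl⟩
    · refine .inr fun h => hK k hKk hk ?_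
      simpa [ψ, ZMod.intCast_eq_intCast_iff] using h
  refine ((IsPTSeparated.of_finite ((Set.finite_Ico 1 K).image _) ?_).union
    (.of_map_ne ψ x)).mono hsub
  rintro ⟨k, ⟨hk, _⟩, rfl⟩
  exact hx ⟨k, hk, rfl⟩

/-- Let `F = ⟨a,b⟩` be the free group of rank 2 and `(m_k)_{k ≥ 1}` a sequence of
integers whose residues mod every `n ≥ 1` are eventually constant, and which is
eventually bounded away (mod some `n`) from every fixed integer.  Then
`S = {a^{k!} b^{m_k} : k ≥ 1}` is closed in the profinite topology of `F`. -/
theorem closed_of_factorial_powers_times_profinite_divergent_powers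
    (m : ℕ → ℤ)
    (hconst : ∀ n : ℤ, 1 ≤ n → ∃ r : ℤ, ∃ K : ℕ, ∀ k : ℕ, K ≤ k → 1 ≤ k → m k % n = r)
    (hdiv : ∀ c : ℤ, ∃ n : ℤ, 1 ≤ n ∧ ∃ K : ℕ, ∀ k : ℕ, K ≤ k → 1 ≤ k →
      ¬ m k ≡ c [ZMOD n]) :
    IsPTClosed {x : FreeGroup (Fin 2) | ∃ k : ℕ, 1 ≤ k ∧
      x = (FreeGroup.of (0 : Fin 2)) ^ (Nat.factorial k) *
          (FreeGroup.of (1 : Fin 2)) ^ (m k)} :=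
  closed_of_factorial_powers_times_profinite_divergent_powers_general m hdiv
end

section
/- Let F = ⟨a,b⟩ be the free group of rank 2 and let (m_k)_{k≥1} be a sequence of integers such that: (i) for every integer n ≥ 1 the sequence of residues (m_k mod n) is eventually constant; and (ii) for every integer m there exists n ≥ 1 with m_k ≢ m (mod n) for all sufficiently large k. Then the sequence (a^{k!} b^{m_k})_{k≥1} has no limit point in F: for every w ∈ F there exist a finite-index normal subgroup N of F and an integer K such that a^{k!} b^{m_k} ∉ wN for all k ≥ K. -/
open scoped Pointwise

/-- Let `F = ⟨a,b⟩` be the free group of rank 2 and `(m_k)_{k ≥ 1}` a sequence of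
integers whose residues mod every `n ≥ 1` are eventually constant, and which is
eventually bounded away (mod some `n`) from every fixed integer.  Then the
sequence `(a^{k!} b^{m_k})_{k ≥ 1}` has no limit point in `F`: for every `w ∈ F`
there are a finite-index normal subgroup `N` of `F` and a `K` such that
`a^{k!} b^{m_k} ∉ wN` for all `k ≥ K`. -/
theorem no_limit_point_of_factorial_powers_times_profinite_divergent_powers
    (m : ℕ → ℤ)
    (hconst : ∀ n : ℤ, 1 ≤ n → ∃ r : ℤ, ∃ K : ℕ, ∀ k : ℕ, K ≤ k → 1 ≤ k → m k % n = r)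
    (hdiv : ∀ c : ℤ, ∃ n : ℤ, 1 ≤ n ∧ ∃ K : ℕ, ∀ k : ℕ, K ≤ k → 1 ≤ k →
      ¬ m k ≡ c [ZMOD n]) :
    ∀ w : FreeGroup (Fin 2), ∃ N : Subgroup (FreeGroup (Fin 2)),
      N.Normal ∧ N.FiniteIndex ∧ ∃ K : ℕ, ∀ k : ℕ, K ≤ k → 1 ≤ k →
        (FreeGroup.of (0 : Fin 2)) ^ (Nat.factorial k) *
            (FreeGroup.of (1 : Fin 2)) ^ (m k) ∉
          w • (N : Set (FreeGroup (Fin 2))) := by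
  intro w
  -- the `b`-exponent sum homomorphism
  set L : FreeGroup (Fin 2) →* Multiplicative ℤ :=
    FreeGroup.lift (fun i => Multiplicative.ofAdd (if i = 1 then (1 : ℤ) else 0)) with hL
  obtain ⟨n, hn1, K, hK⟩ := hdiv (Multiplicative.toAdd (L w))
  have hnN : ((n.toNat : ℕ) : ℤ) = n := Int.toNat_of_nonneg (by omega)
  haveI : NeZero n.toNat := ⟨by omega⟩
  set ψ : Multiplicative ℤ →* Multiplicative (ZMod n.toNat) :=
    AddMonoidHom.toMultiplicative (Int.castAddHom (ZMod n.toNat)) with hψ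
  set φ := ψ.comp L with hφ
  refine ⟨φ.ker, MonoidHom.normal_ker φ, Subgroup.finiteIndex_ker φ, K, ?_⟩
  intro k hk hk1 hmem
  rw [mem_leftCoset_iff] at hmem
  have hker : φ (FreeGroup.of (0 : Fin 2) ^ k.factorial * FreeGroup.of (1 : Fin 2) ^ m k)
      = φ w := by
    have := (MonoidHom.mem_ker (f := φ)).mp hmem
    rw [map_mul, map_inv] at this
    exact (inv_mul_eq_one.mp this).symm
  have h0 : φ (FreeGroup.of (0 : Fin 2)) = 1 := by
    simp [hφ, hψ, hL]
  have h1 : φ (FreeGroup.of (1 : Fin 2)) = Multiplicative.ofAdd ((1 : ZMod n.toNat)) := by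
    simp [hφ, hψ, hL]
  rw [map_mul, map_pow, map_zpow, h0, h1, one_pow, one_mul] at hker
  have hw : φ w = Multiplicative.ofAdd ((Multiplicative.toAdd (L w) : ℤ) : ZMod n.toNat) := by
    simp [hφ, hψ]
  rw [hw] at hker
  have hcast : ((m k : ℤ) : ZMod n.toNat) = ((Multiplicative.toAdd (L w) : ℤ) : ZMod n.toNat) := by
    have : Multiplicative.toAdd ((Multiplicative.ofAdd ((1 : ZMod n.toNat))) ^ (m k))
        = Multiplicative.toAdd (Multiplicative.ofAdd
            ((Multiplicative.toAdd (L w) : ℤ) : ZMod n.toNat)) := by rw [hker]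
    simpa [toAdd_zpow, zsmul_one] using this
  have := (ZMod.intCast_eq_intCast_iff _ _ _).mp hcast
  rw [hnN] at this
  exact hK k hk hk1 this
end

section
/- Let F = ⟨a,b⟩ be the free group of rank 2, let (m_k)_{k≥1} be any sequence of integers, let S = {a^{k!} b^{m_k} : k ≥ 1}, and let ⟨b⟩ denote the cyclic subgroup of F generated by b. Then the identity 1 of F does not belong to the product set S⟨b⟩, but 1 lies in the closure of S⟨b⟩ in the profinite topology of F (every finite-index normal subgroup of F meets S⟨b⟩). Consequently S⟨b⟩ is not closed in the profinite topology of F. -/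
open scoped Pointwise

/-- Let `F = ⟨a,b⟩` be free of rank 2, `(m_k)_{k ≥ 1}` any integer sequence, and
`S = {a^{k!} b^{m_k} : k ≥ 1}`.  Then `1 ∉ S⟨b⟩`, yet `1` lies in the profinite
closure of `S⟨b⟩` (every finite-index normal subgroup of `F` meets `S⟨b⟩`);
consequently `S⟨b⟩` is not closed in the profinite topology of `F`. -/
theorem product_with_cyclic_subgroup_not_closed
    (m : ℕ → ℤ) (S : Set (FreeGroup (Fin 2)))
    (hS : S = {x | ∃ k : ℕ, 1 ≤ k ∧
      x = (FreeGroup.of (0 : Fin 2)) ^ (Nat.factorial k) *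
          (FreeGroup.of (1 : Fin 2)) ^ (m k)}) :
    (1 : FreeGroup (Fin 2)) ∉
        S * (Subgroup.zpowers (FreeGroup.of (1 : Fin 2)) : Set (FreeGroup (Fin 2))) ∧
    (∀ N : Subgroup (FreeGroup (Fin 2)), N.Normal → N.FiniteIndex →
      ∃ g ∈ S * (Subgroup.zpowers (FreeGroup.of (1 : Fin 2)) : Set (FreeGroup (Fin 2))),
        g ∈ N) ∧
    ¬ IsPTClosed
        (S * (Subgroup.zpowers (FreeGroup.of (1 : Fin 2)) : Set (FreeGroup (Fin 2)))) := by
  subst hS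
  set a := FreeGroup.of (0 : Fin 2)
  set b := FreeGroup.of (1 : Fin 2)
  set S : Set (FreeGroup (Fin 2)) :=
    {x | ∃ k : ℕ, 1 ≤ k ∧ x = a ^ (Nat.factorial k) * b ^ (m k)} with hS
  -- the exponent-sum-of-`a` homomorphism
  set φ : FreeGroup (Fin 2) →* Multiplicative ℤ :=
    FreeGroup.lift (fun i => if i = 0 then Multiplicative.ofAdd (1 : ℤ) else 1) with hφ
  have hφa : φ a = Multiplicative.ofAdd (1 : ℤ) := by simp [hφ, a]
  have hφb : φ b = 1 := by simp [hφ, b]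
  have h1 : (1 : FreeGroup (Fin 2)) ∉ S * (Subgroup.zpowers b : Set (FreeGroup (Fin 2))) := by
    rintro ⟨s, hs, t, ht, hst⟩
    obtain ⟨k, hk, rfl⟩ := hs
    obtain ⟨j, rfl⟩ := ht
    have := congrArg φ hst
    simp only [map_mul, map_pow, map_zpow, hφa, hφb, one_pow, one_zpow, mul_one, map_one] at this
    have h2 : ((Nat.factorial k : ℤ)) = 0 := by
      have := congrArg Multiplicative.toAdd this
      simpa using this
    have := Nat.factorial_pos k
    omega
  have h2 : ∀ N : Subgroup (FreeGroup (Fin 2)), N.Normal → N.FiniteIndex →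
      ∃ g ∈ S * (Subgroup.zpowers b : Set (FreeGroup (Fin 2))), g ∈ N := by
    intro N hNn hNf
    haveI := hNn; haveI := hNf
    set k := N.index with hk
    have hk1 : 1 ≤ k := Nat.one_le_iff_ne_zero.mpr hNf.index_ne_zero
    refine ⟨a ^ (Nat.factorial k), ⟨a ^ (Nat.factorial k) * b ^ (m k),
      ⟨k, hk1, rfl⟩, b ^ (-(m k)), ⟨-(m k), rfl⟩, by group⟩, ?_⟩
    obtain ⟨c, hc⟩ : k ∣ Nat.factorial k := Nat.dvd_factorial (by omega) le_rfl
    rw [hc, pow_mul]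
    exact pow_mem (Subgroup.pow_index_mem N a) c
  refine ⟨h1, h2, fun h => ?_⟩
  obtain ⟨N, hNn, hNf, hdisj⟩ := h 1 h1
  obtain ⟨g, hg, hgN⟩ := h2 N hNn hNf
  have : g ∈ (1 : FreeGroup (Fin 2)) • (N : Set (FreeGroup (Fin 2))) := by
    simpa using hgN
  exact Set.eq_empty_iff_forall_notMem.mp hdisj g ⟨this, hg⟩
end

section
/- Let F be the free group on the disjoint union K ⊔ L of two finite nonempty sets, and let f : ℕ → ℕ be any strictly increasing function. Then there exist a descending chain G_1 ⊇ G_2 ⊇ ⋯ of finite-index normal subgroups of F such that every finite-index normal subgroup of F contains some G_m, and elements r_m ∈ ⟨K⟩ (the subgroup generated by K) such that: (1) every element of the coset G_m r_m has reduced word length (with respect to the generators K ⊔ L) greater than f(m); and (2) for all k > m, the cosets G_m r_k and G_m r_m are distinct. -/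
/-!
Let `σ : F → ℤ` be the exponent sum; it is `1`-Lipschitz for the word length, so `|σ g| ≤ |g|`.
Fix `a ∈ K`, put `r m = a ^ 2 ^ f m` and let `G m` be the intersection of `σ⁻¹ (2 ^ (f m + 1) ℤ)`
with the first `m + 1` members of an enumeration of the finite-index normal subgroups of `F`.
These are countably many: each is the kernel of the action of `F` on its finite quotient, a
homomorphism into some `Perm (Fin n)` determined by the images of the finitely many generators.
Every `g ∈ G m * r m` has `σ g ≡ 2 ^ f m [ZMOD 2 ^ (f m + 1)]`, hence `|g| ≥ 2 ^ f m > f m`; and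
for `k > m`, `σ (r k * (r m)⁻¹) = 2 ^ f k - 2 ^ f m ≡ 2 ^ f m`, so `r k * (r m)⁻¹ ∉ G m`.
-/

lemma Int.le_abs_of_two_mul_dvd_sub_self {d s : ℤ} (hd : 0 ≤ d) (h : 2 * d ∣ s - d) :
    d ≤ |s| := by
  obtain ⟨c, hc⟩ := h
  have hs : s = d * (2 * c + 1) := by linarith
  rw [hs, abs_mul, abs_of_nonneg hd]
  exact le_mul_of_one_le_right hd (Int.one_le_abs (by omega))

namespace FreeGroup

variable {α : Type*}

def expSum : FreeGroup α →* Multiplicative ℤ :=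
  lift fun _ => Multiplicative.ofAdd 1

lemma toAdd_expSum_of_pow (a : α) (n : ℕ) : (expSum (of a ^ n)).toAdd = n := by
  simp [expSum]

lemma abs_toAdd_expSum_mk_le (L : List (α × Bool)) : |(expSum (mk L)).toAdd| ≤ L.length := by
  induction L with
  | nil => simp [expSum, lift_mk]
  | cons x L ih =>
    rw [expSum, lift_mk] at ih ⊢
    obtain ⟨a, _ | _⟩ := x <;>
    · simp only [List.map_cons, List.prod_cons, cond_true, cond_false, toAdd_mul, toAdd_inv,
        toAdd_ofAdd, List.length_cons, Nat.cast_succ]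
      grind

lemma abs_toAdd_expSum_le_norm [DecidableEq α] (g : FreeGroup α) :
    |(expSum g).toAdd| ≤ g.norm := by
  simpa only [mk_toWord, norm] using abs_toAdd_expSum_mk_le g.toWord

def expSumMod (α : Type*) (q : ℕ) : FreeGroup α →* Multiplicative (ZMod q) :=
  (Int.castAddHom (ZMod q)).toMultiplicative.comp expSum

lemma mem_ker_expSumMod {q : ℕ} {g : FreeGroup α} :
    g ∈ (expSumMod α q).ker ↔ (q : ℤ) ∣ (expSum g).toAdd :=
  ZMod.intCast_zmod_eq_zero_iff_dvd _ q

lemma ker_expSumMod_le_of_dvd {q q' : ℕ} (h : q ∣ q') :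
    (expSumMod α q').ker ≤ (expSumMod α q).ker := fun _ hg =>
  mem_ker_expSumMod.2 ((Int.natCast_dvd_natCast.2 h).trans (mem_ker_expSumMod.1 hg))

lemma two_pow_le_norm_of_mul_inv_mem_ker [DecidableEq α] {a : α} {n : ℕ} {g : FreeGroup α}
    (h : g * (of a ^ 2 ^ n)⁻¹ ∈ (expSumMod α (2 ^ (n + 1))).ker) : 2 ^ n ≤ g.norm := by
  rw [mem_ker_expSumMod, _root_.map_mul, _root_.map_inv, toAdd_mul, toAdd_inv, toAdd_expSum_of_pow,
    ← sub_eq_add_neg, Nat.cast_pow, Nat.cast_pow, pow_succ'] at h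
  exact_mod_cast (Int.le_abs_of_two_mul_dvd_sub_self (by positivity) h).trans
    (abs_toAdd_expSum_le_norm g)

lemma of_pow_two_pow_mul_inv_notMem_ker {a : α} {n k : ℕ} (hnk : n < k) :
    of a ^ 2 ^ k * (of a ^ 2 ^ n)⁻¹ ∉ (expSumMod α (2 ^ (n + 1))).ker := by
  rw [mem_ker_expSumMod, _root_.map_mul, _root_.map_inv, toAdd_mul, toAdd_inv, toAdd_expSum_of_pow,
    toAdd_expSum_of_pow, ← sub_eq_add_neg, Nat.cast_pow, Nat.cast_pow, Nat.cast_pow, Nat.cast_ofNat,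
    dvd_sub_right (pow_dvd_pow 2 hnk), pow_dvd_pow_iff two_ne_zero (by decide)]
  exact n.not_succ_le_self

lemma countable_setOf_normal_finiteIndex [Finite α] :
    {N : Subgroup (FreeGroup α) | N.Normal ∧ N.FiniteIndex}.Countable := by
  refine (Set.countable_range fun p : Σ n, α → Equiv.Perm (Fin n) => (lift p.2).ker).mono ?_
  rintro N ⟨hN, hfin⟩
  obtain ⟨n, ⟨e⟩⟩ := Finite.exists_equiv_fin (FreeGroup α ⧸ N)
  let φ : FreeGroup α →* Equiv.Perm (Fin n) :=
    (e.permCongrHom : Equiv.Perm (FreeGroup α ⧸ N) →* _).comp (MulAction.toPermHom _ _)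
  refine ⟨⟨n, lift.symm φ⟩, ?_⟩
  simp only [φ, Equiv.apply_symm_apply, MonoidHom.ker_mulEquiv_comp]
  rw [← Subgroup.normalCore_eq_ker, Subgroup.normalCore_eq_self]

end FreeGroup

lemma Subgroup.exists_antitone_cofinal_of_countable {G : Type*} [Group G]
    (hG : {N : Subgroup G | N.Normal ∧ N.FiniteIndex}.Countable) :
    ∃ C : ℕ → Subgroup G, Antitone C ∧ (∀ m, (C m).Normal) ∧ (∀ m, (C m).FiniteIndex) ∧
      ∀ N : Subgroup G, N.Normal → N.FiniteIndex → ∃ m, C m ≤ N := by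
  obtain ⟨u, hu⟩ := hG.exists_eq_range ⟨⊤, inferInstance, inferInstance⟩
  have hu_mem (i : ℕ) : u i ∈ {N : Subgroup G | N.Normal ∧ N.FiniteIndex} :=
    hu ▸ Set.mem_range_self i
  refine ⟨fun m => ⨅ i : Set.Iic m, u i.1,
    fun m m' h => le_iInf fun i => iInf_le_of_le ⟨i, (Set.mem_Iic.1 i.2).trans h⟩ le_rfl,
    fun m => Subgroup.normal_iInf_normal fun i => (hu_mem i).1,
    fun m => Subgroup.finiteIndex_iInf fun i => (hu_mem i).2, fun N hN hfin => ?_⟩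
  obtain ⟨m, rfl⟩ : N ∈ Set.range u := hu ▸ ⟨hN, hfin⟩
  exact ⟨m, iInf_le_of_le ⟨m, Set.mem_Iic.2 le_rfl⟩ le_rfl⟩

theorem exists_cofinal_chain_and_far_coset_representatives_general
    (K L : Type) [Fintype K] [Fintype L] [Nonempty K]
    [DecidableEq K] [DecidableEq L]
    (f : ℕ → ℕ) (hf : StrictMono f) :
    ∃ (G : ℕ → Subgroup (FreeGroup (K ⊕ L))) (r : ℕ → FreeGroup (K ⊕ L)),
      (∀ m : ℕ, G (m + 1) ≤ G m) ∧
      (∀ m : ℕ, (G m).Normal) ∧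
      (∀ m : ℕ, (G m).FiniteIndex) ∧
      (∀ N : Subgroup (FreeGroup (K ⊕ L)), N.Normal → N.FiniteIndex →
        ∃ m : ℕ, G m ≤ N) ∧
      (∀ m : ℕ, r m ∈ Subgroup.closure
        (Set.range fun k : K => FreeGroup.of (Sum.inl k : K ⊕ L))) ∧
      (∀ m : ℕ, ∀ g : FreeGroup (K ⊕ L), g * (r m)⁻¹ ∈ G m →
        f m < FreeGroup.norm g) ∧
      (∀ m k : ℕ, m < k → r k * (r m)⁻¹ ∉ G m) := by
  obtain ⟨k₀⟩ := ‹Nonempty K›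
  obtain ⟨C, hC_anti, hC_normal, hC_finiteIndex, hC_cofinal⟩ :=
    Subgroup.exists_antitone_cofinal_of_countable
      (FreeGroup.countable_setOf_normal_finiteIndex (α := K ⊕ L))
  let H (m : ℕ) := (FreeGroup.expSumMod (K ⊕ L) (2 ^ (f m + 1))).ker
  have hH_anti : Antitone H := fun m m' h =>
    FreeGroup.ker_expSumMod_le_of_dvd (pow_dvd_pow 2 (Nat.succ_le_succ (hf.monotone h)))
  refine ⟨fun m => C m ⊓ H m, fun m => FreeGroup.of (Sum.inl k₀) ^ 2 ^ f m,
    fun m => (hC_anti.inf hH_anti) m.le_succ,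
    fun m => have := hC_normal m; Subgroup.normal_inf_normal _ _,
    fun m => have := hC_finiteIndex m; inferInstance,
    fun N hN hfin => (hC_cofinal N hN hfin).imp fun m hm => inf_le_left.trans hm,
    fun m => Subgroup.pow_mem _ (Subgroup.subset_closure (Set.mem_range_self k₀)) _,
    fun m g hg => Nat.lt_two_pow_self.trans_le
      (FreeGroup.two_pow_le_norm_of_mul_inv_mem_ker hg.2),
    fun m k hmk hmem => FreeGroup.of_pow_two_pow_mul_inv_notMem_ker (hf hmk) hmem.2⟩

/-- Let `F` be the free group on `K ⊕ L` (`K`, `L` finite nonempty) and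
`f : ℕ → ℕ` strictly increasing.  There exist a descending, cofinal chain
`G 1 ⊇ G 2 ⊇ ⋯` of finite-index normal subgroups of `F` and elements
`r m ∈ ⟨K⟩` such that every element of the coset `G m * r m` has reduced word
length greater than `f m`, and `G m * r k ≠ G m * r m` whenever `k > m`. -/
theorem exists_cofinal_chain_and_far_coset_representatives
    (K L : Type) [Fintype K] [Fintype L] [Nonempty K] [Nonempty L]
    [DecidableEq K] [DecidableEq L]
    (f : ℕ → ℕ) (hf : StrictMono f) :
    ∃ (G : ℕ → Subgroup (FreeGroup (K ⊕ L))) (r : ℕ → FreeGroup (K ⊕ L)),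
      (∀ m : ℕ, G (m + 1) ≤ G m) ∧
      (∀ m : ℕ, (G m).Normal) ∧
      (∀ m : ℕ, (G m).FiniteIndex) ∧
      (∀ N : Subgroup (FreeGroup (K ⊕ L)), N.Normal → N.FiniteIndex →
        ∃ m : ℕ, G m ≤ N) ∧
      (∀ m : ℕ, r m ∈ Subgroup.closure
        (Set.range fun k : K => FreeGroup.of (Sum.inl k : K ⊕ L))) ∧
      (∀ m : ℕ, ∀ g : FreeGroup (K ⊕ L), g * (r m)⁻¹ ∈ G m →
        f m < FreeGroup.norm g) ∧
      (∀ m k : ℕ, m < k → r k * (r m)⁻¹ ∉ G m) :=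
  exists_cofinal_chain_and_far_coset_representatives_general K L f hf
end

section
/- Let F be the free group on the disjoint union K ⊔ L of two finite nonempty sets, and let ⟨K⟩ be the (finitely generated) subgroup generated by K. There exists a subset S ⊆ F such that: S is closed in the profinite topology of F; S is discrete in the profinite topology of F; the reduced word of every element of S ends in a generator from L or the inverse of a generator from L; and the product set S⟨K⟩ is not closed in the profinite topology of F. -/
open scoped Pointwise

/-!
Fix generators `x ∈ K`, `y ∈ L` and let `S = {x ^ 2 ^ n * y ^ n ! | n ∈ ℕ}`.

If `g` has `K`-exponent sum `a`, then modulo `3 * 2 ^ |a|` the `K`-exponent sum `2 ^ n` of the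
`n`-th element of `S` agrees with `a` only for `n < |a|` (the factor `3` covers `a = 0`). So some coset `g N` meets `S` in a finite
set, and since free groups are residually finite these finitely many points can be separated from
`g` by a smaller `N`: `S` is closed and discrete. Residual finiteness itself comes from letting each
generator act on the finite set of suffixes of a word `L` by a permutation extending left
multiplication; `mk L` then moves `1` to `mk L`.

On the other hand, if `N` has index `n` then `y ^ n ! ∈ N`, so the conjugate
`x ^ 2 ^ n * y ^ n ! * x ^ (-2 ^ n)` is an element of `S⟨K⟩` in `N`, while `1 ∉ S⟨K⟩`
because the `L`-exponent sum is `n ! ≠ 0` on `x ^ 2 ^ n * y ^ n ! * ⟨K⟩`.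
-/

open scoped Nat

theorem exists_perm_apply_eq_mul {G : Type*} [Group G] (T : Set G) [Finite T] (g : G) :
    ∃ σ : Equiv.Perm T, ∀ (t : T) (h : g * t ∈ T), σ t = ⟨g * t, h⟩ := by
  classical
  have : Fintype T := Fintype.ofFinite T
  let e : {t : T // g * t ∈ T} ≃ {t : T // g⁻¹ * t ∈ T} :=
    { toFun := fun t => ⟨⟨g * t, t.2⟩, by simp⟩
      invFun := fun t => ⟨⟨g⁻¹ * t, t.2⟩, by simp⟩
      left_inv := fun t => by ext; simp
      right_inv := fun t => by ext; simp }
  exact ⟨e.extendSubtype, fun t h => by rw [Equiv.extendSubtype_apply_of_mem e t h]; rfl⟩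

namespace FreeGroup

variable {α : Type*}

theorem mk_cons_true (a : α) (L : List (α × Bool)) : mk ((a, true) :: L) = of a * mk L :=
  rfl

theorem mk_cons_false (a : α) (L : List (α × Bool)) :
    mk ((a, false) :: L) = (of a)⁻¹ * mk L := by
  simp [of, inv_mk, invRev, mul_mk]

theorem coe_lift_mk_apply_one {T : Set (FreeGroup α)} {σ : α → Equiv.Perm T}
    (hσ : ∀ a (t : T) (h : of a * (t : FreeGroup α) ∈ T), σ a t = ⟨of a * t, h⟩)
    {L : List (α × Bool)} (hL : ∀ L', L' <:+ L → mk L' ∈ T) :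
    (lift σ (mk L) ⟨1, hL [] L.nil_suffix⟩ : FreeGroup α) = mk L := by
  induction L with
  | nil => rfl
  | cons c L ih =>
    have hsuffix : ∀ L', L' <:+ L → mk L' ∈ T := fun L' h => hL L' (h.trans (L.suffix_cons c))
    have ih := ih hsuffix
    have hcons := hL _ List.suffix_rfl
    obtain ⟨a, _ | _⟩ := c
    · rw [mk_cons_false] at hcons ⊢
      have hback : σ a ⟨_, hcons⟩ = lift σ (mk L) ⟨1, _⟩ :=
        (hσ a _ (by simpa using hsuffix L List.suffix_rfl)).trans
          (Subtype.ext ((mul_inv_cancel_left _ _).trans ih.symm))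
      rw [_root_.map_mul, _root_.map_inv, lift_apply_of, Equiv.Perm.mul_apply, ← hback,
        Equiv.Perm.inv_eq_iff_eq.mpr rfl]
    · rw [mk_cons_true] at hcons ⊢
      rw [_root_.map_mul, Equiv.Perm.mul_apply, lift_apply_of,
        hσ a _ (by simpa only [ih] using hcons)]
      exact congrArg (of a * ·) ih

instance residuallyFinite : Group.ResiduallyFinite (FreeGroup α) := by
  refine Group.residuallyFinite_of_forall_exists_finite_monoidHom fun w hw => ?_
  obtain ⟨L, rfl⟩ : ∃ L, mk L = w := Quot.exists_rep w
  set T : Set (FreeGroup α) := mk '' {L' | L' <:+ L}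
  have : Finite T :=
    ((List.finite_toSet L.tails).image mk).subset (by
      rintro _ ⟨L', h, rfl⟩; exact ⟨L', (List.mem_tails _ _).2 h, rfl⟩)
  choose σ hσ using fun a => exists_perm_apply_eq_mul T (of a)
  have hw' := coe_lift_mk_apply_one hσ (L := L) fun L' h => ⟨L', h, rfl⟩
  refine ⟨Equiv.Perm T, inferInstance, inferInstance, lift σ, fun h1 => hw ?_⟩
  simpa [h1] using hw'.symm

theorem toWord_of_pow_mul_of_pow [DecidableEq α] (a b : α) (p q : ℕ) :
    (of a ^ p * of b ^ q).toWord = List.replicate p (a, true) ++ List.replicate q (b, true) := by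
  rw [toWord_mul, toWord_of_pow, toWord_of_pow, IsReduced.reduce_eq]
  simp [IsReduced, List.isChain_append, List.isChain_replicate_of_rel, List.getLast?_replicate,
    List.head?_replicate]

end FreeGroup

theorem Int.lt_natAbs_of_dvd_two_pow_sub {a : ℤ} {n : ℕ} (h : 3 * 2 ^ a.natAbs ∣ 2 ^ n - a) :
    n < a.natAbs := by
  by_contra! hn
  have ha : (2 : ℤ) ^ a.natAbs ∣ a := by
    have := dvd_sub (pow_dvd_pow 2 hn) (dvd_of_mul_left_dvd h)
    rwa [sub_sub_cancel] at this
  rcases eq_or_ne a 0 with rfl | ha0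
  · have h3 : (3 : ℤ) ∣ 2 :=
      Int.prime_three.dvd_of_dvd_pow (by simpa using dvd_of_mul_right_dvd h)
    norm_num at h3
  · have := Nat.le_of_dvd (Int.natAbs_pos.2 ha0) (by simpa using Int.natAbs_dvd_natAbs.2 ha)
    exact (Nat.lt_two_pow_self).not_ge this

section ProfiniteTopology

variable {G : Type*} [Group G]

def IsPTLocallyFinite (S : Set G) : Prop :=
  ∀ g : G, ∃ N : FiniteIndexNormalSubgroup G, (g • (N : Set G) ∩ S).Finite

theorem exists_le_smul_inter_subset_singleton [Group.ResiduallyFinite G] (g : G)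
    (N₀ : FiniteIndexNormalSubgroup G) {T : Set G} (hT : T.Finite) :
    ∃ N ≤ N₀, g • (N : Set G) ∩ T ⊆ {g} := by
  induction T, hT using Set.Finite.induction_on with
  | empty => exact ⟨N₀, le_rfl, by simp⟩
  | @insert t T _ _ ih =>
    obtain ⟨N, hN₀, hN⟩ := ih
    by_cases htg : t = g
    · refine ⟨N, hN₀, ?_⟩
      rintro x ⟨hx, rfl | hxT⟩
      exacts [htg, hN ⟨hx, hxT⟩]
    obtain ⟨H, hH⟩ := Group.exists_finiteIndexNormalSubgroup_notMem (g⁻¹ * t)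
      (fun h => htg (eq_of_inv_mul_eq_one h).symm)
    refine ⟨N ⊓ H, inf_le_left.trans hN₀, ?_⟩
    rintro x ⟨hx, rfl | hxT⟩
    · exact absurd (mem_leftCoset_iff g |>.1 hx).2 hH
    · exact hN ⟨Set.smul_set_mono inf_le_left hx, hxT⟩

namespace IsPTLocallyFinite

variable [Group.ResiduallyFinite G] {S : Set G}

theorem exists_smul_inter_subset_singleton (hS : IsPTLocallyFinite S) (g : G) :
    ∃ N : FiniteIndexNormalSubgroup G, g • (N : Set G) ∩ S ⊆ {g} := by
  obtain ⟨N₀, hN₀⟩ := hS g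
  obtain ⟨N, hN, hsub⟩ := exists_le_smul_inter_subset_singleton g N₀ hN₀
  exact ⟨N, fun x hx => hsub ⟨hx.1, Set.smul_set_mono hN hx.1, hx.2⟩⟩

theorem isPTClosed (hS : IsPTLocallyFinite S) : IsPTClosed S := by
  intro g hg
  obtain ⟨N, hN⟩ := hS.exists_smul_inter_subset_singleton g
  refine ⟨N, inferInstance, inferInstance, Set.eq_empty_of_forall_notMem fun x hx => ?_⟩
  exact hg ((hN hx) ▸ hx.2)

theorem exists_smul_inter_eq_singleton (hS : IsPTLocallyFinite S) {s : G} (hs : s ∈ S) :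
    ∃ N : Subgroup G, N.Normal ∧ N.FiniteIndex ∧ s • (N : Set G) ∩ S = {s} := by
  obtain ⟨N, hN⟩ := hS.exists_smul_inter_subset_singleton s
  refine ⟨N, inferInstance, inferInstance, hN.antisymm ?_⟩
  exact Set.singleton_subset_iff.2 ⟨Set.mem_smul_set.2 ⟨1, N.one_mem, mul_one s⟩, hs⟩

end IsPTLocallyFinite

theorem isPTLocallyFinite_range_of_map_eq_ofAdd_two_pow (θ : G →* Multiplicative ℤ)
    (s : ℕ → G) (hs : ∀ n, θ (s n) = .ofAdd (2 ^ n)) : IsPTLocallyFinite (Set.range s) := by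
  intro g
  set a := (θ g).toAdd
  set m := 3 * 2 ^ a.natAbs
  have : NeZero m := ⟨by positivity⟩
  let π : G →* Multiplicative (ZMod m) := (Int.castAddHom (ZMod m)).toMultiplicative.comp θ
  refine ⟨.ofSubgroup π.ker, ((Set.finite_lt_nat a.natAbs).image s).subset ?_⟩
  rintro _ ⟨hmem, n, rfl⟩
  refine ⟨n, Int.lt_natAbs_of_dvd_two_pow_sub ?_, rfl⟩
  have hker : ((θ (g⁻¹ * s n)).toAdd : ZMod m) = 0 := (mem_leftCoset_iff g).1 hmem
  rw [map_mul, map_inv, hs, toAdd_mul, toAdd_inv, toAdd_ofAdd, ZMod.intCast_zmod_eq_zero_iff_dvd]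
    at hker
  exact_mod_cast (neg_add_eq_sub a _) ▸ hker

theorem not_isPTClosed_range_mul_subgroup {M : Type*} [Group M] [IsMulTorsionFree M]
    (H : Subgroup G) (ψ : G →* M) (hψ : H ≤ ψ.ker) (y : G) (hy : ψ y ≠ 1) (u : ℕ → G)
    (hu : ∀ n, u n ∈ H) : ¬ IsPTClosed (Set.range (fun n => u n * y ^ n !) * (H : Set G)) := by
  intro hcl
  have hone : (1 : G) ∉ Set.range (fun n => u n * y ^ n !) * (H : Set G) := by
    rintro ⟨_, ⟨n, rfl⟩, k, hk, hprod⟩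
    have := congrArg ψ hprod
    rw [map_mul, map_mul, map_pow, hψ (hu n), hψ hk, map_one, one_mul, mul_one,
      pow_eq_one_iff] at this
    exact this.elim hy n.factorial_ne_zero
  obtain ⟨N, hN, hNfin, hempty⟩ := hcl 1 hone
  set n := N.index
  have hyN : y ^ n ! ∈ N := by
    obtain ⟨c, hc⟩ := Nat.dvd_factorial (Nat.pos_of_ne_zero hNfin.index_ne_zero) le_rfl
    rw [hc, pow_mul]
    exact N.pow_mem (N.pow_index_mem y) c
  refine (Set.eq_empty_iff_forall_notMem.1 hempty) (u n * y ^ n ! * (u n)⁻¹) ⟨?_, ?_⟩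
  · rw [one_smul]
    exact hN.conj_mem _ hyN _
  · exact Set.mul_mem_mul ⟨n, rfl⟩ (H.inv_mem (hu n))

end ProfiniteTopology

theorem exists_closed_discrete_set_with_L_tails_and_product_not_closed_general
    (K L : Type) [Nonempty K] [Nonempty L]
    [DecidableEq K] [DecidableEq L] :
    ∃ S : Set (FreeGroup (K ⊕ L)),
      IsPTClosed S ∧
      (∀ s ∈ S, ∃ N : Subgroup (FreeGroup (K ⊕ L)), N.Normal ∧ N.FiniteIndex ∧
        (s • (N : Set (FreeGroup (K ⊕ L)))) ∩ S = {s}) ∧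
      (∀ s ∈ S, ∃ (l : L) (b : Bool),
        (FreeGroup.toWord s).getLast? = some (Sum.inr l, b)) ∧
      ¬ IsPTClosed (S *
        (Subgroup.closure (Set.range fun k : K => FreeGroup.of (Sum.inl k : K ⊕ L)) :
          Set (FreeGroup (K ⊕ L)))) := by
  obtain ⟨k⟩ := ‹Nonempty K›
  obtain ⟨l⟩ := ‹Nonempty L›
  let x := FreeGroup.of (Sum.inl k : K ⊕ L)
  let y := FreeGroup.of (Sum.inr l : K ⊕ L)
  let exponentK : FreeGroup (K ⊕ L) →* Multiplicative ℤ :=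
    FreeGroup.lift (Sum.elim (fun _ => .ofAdd 1) 1)
  let exponentL : FreeGroup (K ⊕ L) →* Multiplicative ℤ :=
    FreeGroup.lift (Sum.elim 1 (fun _ => .ofAdd 1))
  have hS : IsPTLocallyFinite (Set.range fun n => x ^ 2 ^ n * y ^ n !) :=
    isPTLocallyFinite_range_of_map_eq_ofAdd_two_pow exponentK _ fun n => by
      simp [x, y, exponentK, ← ofAdd_nsmul]
  refine ⟨_, hS.isPTClosed, fun s hs => hS.exists_smul_inter_eq_singleton hs, ?_,
    not_isPTClosed_range_mul_subgroup _ exponentL ?_ y (by simp [y, exponentL]) _ fun n => ?_⟩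
  · rintro _ ⟨n, rfl⟩
    refine ⟨l, true, ?_⟩
    simp [x, y, FreeGroup.toWord_of_pow_mul_of_pow, List.getLast?_replicate, n.factorial_ne_zero]
  · rw [Subgroup.closure_le]
    rintro _ ⟨k, rfl⟩
    simp [exponentL]
  · exact pow_mem (Subgroup.subset_closure (Set.mem_range_self k)) _

/-- Let `F` be the free group on `K ⊕ L` (`K`, `L` finite nonempty) and `⟨K⟩`
the subgroup generated by the `K`-generators.  There is a subset `S ⊆ F` that is
closed and discrete in the profinite topology of `F`, whose every element has a
reduced word ending in a letter from `L` (or an inverse of one), and such that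
the product set `S⟨K⟩` is not closed in the profinite topology of `F`. -/
theorem exists_closed_discrete_set_with_L_tails_and_product_not_closed
    (K L : Type) [Fintype K] [Fintype L] [Nonempty K] [Nonempty L]
    [DecidableEq K] [DecidableEq L] :
    ∃ S : Set (FreeGroup (K ⊕ L)),
      IsPTClosed S ∧
      (∀ s ∈ S, ∃ N : Subgroup (FreeGroup (K ⊕ L)), N.Normal ∧ N.FiniteIndex ∧
        (s • (N : Set (FreeGroup (K ⊕ L)))) ∩ S = {s}) ∧
      (∀ s ∈ S, ∃ (l : L) (b : Bool),
        (FreeGroup.toWord s).getLast? = some (Sum.inr l, b)) ∧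
      ¬ IsPTClosed (S *
        (Subgroup.closure (Set.range fun k : K => FreeGroup.of (Sum.inl k : K ⊕ L)) :
          Set (FreeGroup (K ⊕ L)))) :=
  exists_closed_discrete_set_with_L_tails_and_product_not_closed_general K L
end
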